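/- Let F be a field of characteristic 0, A an additive abelian group, T an F-vector space, and φ : T × A → F a map F-linear in the first variable and additive in the second, and suppose φ is nondegenerate. Then for every finitely generated subgroup Ā of A and every finite-dimensional subspace T̄ of T, there exist a finitely generated subgroup A' of A containing Ā and a finite-dimensional subspace T' of T containing T̄ such that (A',T') is a nondegenerate pair. -/

import Mathlib

/-! Generalized Witt algebras `W(A,T,φ)` over a field `F` of characteristic `0`,
following Djokovic-Zhao. Here `A` is an (additive) abelian group, `T` an
`F`-vector space, and `φ : T × A → F` is `F`-linear in the first variable and
additive in the second (encoded as `φ : T →ₗ[F] (A →+ F)`). -/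

namespace GW

variable {F : Type*} [Field F]
variable {A : Type*} [AddCommGroup A]
variable {T : Type*} [AddCommGroup T] [Module F T]
variable (φ : T →ₗ[F] (A →+ F))

/-- The bracket on finitely supported functions `A →₀ T`: the bilinear extension of
`[t^α a, t^β b] = t^(α+β) (φ a β • b - φ b α • a)`. -/
noncomputable def brk (x y : A →₀ T) : A →₀ T :=
  x.sum fun α a => y.sum fun β b => Finsupp.single (α + β) (φ a β • b - φ b α • a)

lemma brk_zero_left (y : A →₀ T) : brk φ 0 y = 0 := by
  simp [brk]

lemma brk_zero_right (x : A →₀ T) : brk φ x 0 = 0 := by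
  simp [brk]

lemma brk_single_single (α β : A) (a b : T) :
    brk φ (Finsupp.single α a) (Finsupp.single β b)
      = Finsupp.single (α + β) (φ a β • b - φ b α • a) := by
  unfold brk
  rw [Finsupp.sum_single_index, Finsupp.sum_single_index]
  · simp
  · simp

lemma brk_add_left (x x' y : A →₀ T) : brk φ (x + x') y = brk φ x y + brk φ x' y := by
  unfold brk
  rw [Finsupp.sum_add_index']
  · intro α; simp
  · intro α a a'
    rw [← Finsupp.sum_add]
    congr 1
    funext β b
    rw [← Finsupp.single_add]
    congr 1
    simp only [map_add, LinearMap.add_apply, AddMonoidHom.add_apply, add_smul, smul_add]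
    abel

lemma brk_add_right (x y y' : A →₀ T) : brk φ x (y + y') = brk φ x y + brk φ x y' := by
  unfold brk
  rw [← Finsupp.sum_add]
  congr 1
  funext α a
  rw [Finsupp.sum_add_index']
  · intro β; simp
  · intro β b b'
    rw [← Finsupp.single_add]
    congr 1
    simp only [map_add, LinearMap.add_apply, AddMonoidHom.add_apply, add_smul, smul_add]
    abel

lemma brk_neg_swap (x y : A →₀ T) : brk φ y x = - brk φ x y := by
  unfold brk
  rw [Finsupp.sum_comm]
  rw [← Finsupp.sum_neg]
  congr 1
  funext α a
  rw [← Finsupp.sum_neg]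
  congr 1
  funext β b
  rw [← Finsupp.single_neg, add_comm β α]
  congr 1
  abel

lemma brk_smul_right (c : F) (x y : A →₀ T) : brk φ x (c • y) = c • brk φ x y := by
  unfold brk
  rw [Finsupp.smul_sum]
  congr 1
  funext α a
  rw [Finsupp.sum_smul_index', Finsupp.smul_sum]
  · congr 1
    funext β b
    rw [Finsupp.smul_single]
    congr 1
    simp only [map_smul, LinearMap.smul_apply, AddMonoidHom.smul_apply, smul_sub, smul_smul,
      smul_eq_mul]
    rw [mul_comm]
  · intro β; simp

lemma brk_self [CharZero F] (x : A →₀ T) : brk φ x x = 0 := by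
  have h : brk φ x x = -brk φ x x := brk_neg_swap φ x x
  have h2 : (2 : F) • brk φ x x = 0 := by
    rw [two_smul]
    nth_rewrite 2 [h]
    simp
  calc brk φ x x = (2 : F)⁻¹ • ((2 : F) • brk φ x x) :=
        (inv_smul_smul₀ two_ne_zero _).symm
    _ = 0 := by rw [h2, smul_zero]

lemma brk_leibniz (x y z : A →₀ T) :
    brk φ x (brk φ y z) = brk φ (brk φ x y) z + brk φ y (brk φ x z) := by
  induction x using Finsupp.induction_linear with
  | zero => simp [brk_zero_left, brk_zero_right]
  | add f g hf hg =>
      simp only [brk_add_left, brk_add_right, hf, hg]; abel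
  | single α a =>
    induction y using Finsupp.induction_linear with
    | zero => simp [brk_zero_left, brk_zero_right]
    | add f g hf hg =>
        simp only [brk_add_left, brk_add_right, hf, hg]; abel
    | single β b =>
      induction z using Finsupp.induction_linear with
      | zero => simp [brk_zero_left, brk_zero_right]
      | add f g hf hg =>
          simp only [brk_add_left, brk_add_right, hf, hg]; abel
      | single γ c =>
        rw [brk_single_single, brk_single_single, brk_single_single, brk_single_single,
          brk_single_single, brk_single_single]
        rw [show β + (α + γ) = α + β + γ by abel, show α + (β + γ) = α + β + γ by abel,
          ← Finsupp.single_add]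
        congr 1
        simp only [map_add, map_sub, map_smul, LinearMap.sub_apply, LinearMap.smul_apply,
          AddMonoidHom.add_apply, AddMonoidHom.sub_apply, AddMonoidHom.smul_apply,
          smul_eq_mul, smul_sub, sub_smul, add_smul, smul_smul]
        ring_nf
        module

variable (F A T) in
/-- The carrier of the generalized Witt algebra `W(A,T,φ)`: finitely supported
functions from `A` to `T`, where `t^α ∂` corresponds to the function supported
at `α` with value `∂`. -/
@[nolint unusedArguments]
def W (_φ : T →ₗ[F] (A →+ F)) : Type _ := A →₀ T

noncomputable instance : AddCommGroup (W F A T φ) := inferInstanceAs (AddCommGroup (A →₀ T))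

noncomputable instance : Module F (W F A T φ) := inferInstanceAs (Module F (A →₀ T))

/-- The element `t^α ∂` of the generalized Witt algebra. -/
noncomputable def tt (α : A) (d : T) : W F A T φ := Finsupp.single α d

/-- The underlying finitely supported function of an element of `W(A,T,φ)`. -/
def toF (x : W F A T φ) : A →₀ T := x

/-- The Lie ring structure on the generalized Witt algebra `W(A,T,φ)`, with bracket
determined by `[t^α ∂, t^β ∂'] = t^(α+β) (φ(∂,β) • ∂' - φ(∂',α) • ∂)`. -/
noncomputable instance [CharZero F] : LieRing (W F A T φ) :=
  { (inferInstanceAs (AddCommGroup (A →₀ T)) : AddCommGroup (A →₀ T)) with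
    bracket := fun x y => brk φ (toF φ x) (toF φ y)
    add_lie := fun x y z => brk_add_left φ x y z
    lie_add := fun x y z => brk_add_right φ x y z
    lie_self := fun x => brk_self φ x
    leibniz_lie := fun x y z => brk_leibniz φ x y z }

/-- The generalized Witt algebra `W(A,T,φ)` as a Lie algebra over `F`. -/
noncomputable instance [CharZero F] : LieAlgebra F (W F A T φ) :=
  { (inferInstanceAs (Module F (A →₀ T)) : Module F (A →₀ T)) with
    lie_smul := fun c x y => brk_smul_right φ c x y }

@[simp] theorem bracket_tt [CharZero F] (α β : A) (a b : T) :
    ⁅tt φ α a, tt φ β b⁆ = tt φ (α + β) (φ a β • b - φ b α • a) :=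
  brk_single_single φ α β a b

/-- Nondegeneracy of the map `φ`. -/
def Nondeg : Prop :=
  (∀ α : A, (∀ d : T, φ d α = 0) → α = 0) ∧ (∀ d : T, (∀ α : A, φ d α = 0) → d = 0)

/-- `(A', T')` is a nondegenerate pair for `φ`. -/
def NondegPair (A' : AddSubgroup A) (T' : Submodule F T) : Prop :=
  (∀ d ∈ T', (∀ α ∈ A', φ d α = 0) → d = 0) ∧
  (∀ α ∈ A', (∀ d ∈ T', φ d α = 0) → α = 0)

/-- The subset (in fact Lie subalgebra) of `W(A,T,φ)` consisting of the finitely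
supported functions supported in `A'` with values in `T'`. -/
def supportedIn (A' : AddSubgroup A) (T' : Submodule F T) : Set (W F A T φ) :=
  {x | (∀ α : A, toF φ x α ∈ T') ∧ ∀ α : A, α ∉ A' → toF φ x α = 0}

end GW


/-!
Let `ψ : A →+ Dual F T` send `α` to `∂ ↦ φ(∂, α)`. Since the common kernel of all `ψ α` is zero
and `T̄` is finite-dimensional, finitely many `α` already separate the points of `T̄`; adjoin them
to the generators of `Ā` to get `A'`. The span `S` of `ψ(A')` is finite-dimensional, so its common
kernel `N` has finite codimension and meets `T̄` trivially. Take for `T'` a complement of `N`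
containing `T̄`: an element of `T'` killed by `A'` lies in `T' ∩ N = 0`, and an element of `S`
killing `T'` kills `T' + N = T` as well.
-/

namespace GW

section LinearAlgebra

variable {F V : Type*} [Field F] [AddCommGroup V] [Module F V]

theorem exists_finset_disjoint_iInf_ker {ι : Type*} {U : Submodule F V} [FiniteDimensional F U]
    (f : ι → Module.Dual F V) (h : Disjoint U (⨅ i, LinearMap.ker (f i))) :
    ∃ s : Finset ι, Disjoint U (⨅ i ∈ s, LinearMap.ker (f i)) := by
  classical
  let K : Finset ι → Submodule F V := fun s => U ⊓ ⨅ i ∈ s, LinearMap.ker (f i)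
  obtain ⟨s, -, hmin⟩ := (measure fun s => Module.finrank F (K s)).wf.has_min Set.univ
    ⟨∅, trivial⟩
  refine ⟨s, disjoint_iff.2 <| eq_bot_iff.2 ?_⟩
  rw [← h.eq_bot]
  refine le_inf inf_le_left (le_iInf fun i => ?_)
  -- `K s` has minimal dimension, so adjoining `i` cannot shrink it.
  have hle : K (insert i s) ≤ K s :=
    inf_le_inf_left _ <| biInf_mono fun j => Finset.mem_insert_of_mem
  have : FiniteDimensional F (K s) := Submodule.finiteDimensional_of_le inf_le_left
  have heq : K (insert i s) = K s :=
    Submodule.eq_of_le_of_finrank_le hle (not_lt.1 (hmin _ trivial))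
  exact heq.ge.trans (inf_le_right.trans (biInf_le _ (Finset.mem_insert_self i s)))

theorem exists_le_isCompl_dualCoannihilator {S : Submodule F (Module.Dual F V)}
    [FiniteDimensional F S] {U : Submodule F V} (h : Disjoint U S.dualCoannihilator) :
    ∃ U' : Submodule F V, U ≤ U' ∧ FiniteDimensional F U' ∧ IsCompl U' S.dualCoannihilator := by
  obtain ⟨U', hle, hcompl⟩ := h.exists_isCompl
  have : FiniteDimensional F (V ⧸ S.dualCoannihilator) :=
    Subspace.finiteDimensional_quot_dualCoannihilator_iff.2 ‹_›
  exact ⟨U', hle, (Submodule.quotientEquivOfIsCompl _ _ hcompl.symm).finiteDimensional, hcompl⟩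

theorem disjoint_dualAnnihilator_of_isCompl_dualCoannihilator
    {S : Submodule F (Module.Dual F V)} {U : Submodule F V} (h : IsCompl U S.dualCoannihilator) :
    Disjoint S U.dualAnnihilator := by
  refine disjoint_iff.2 <| eq_bot_iff.2 fun f hf => ?_
  have hN : f ∈ S.dualCoannihilator.dualAnnihilator :=
    Submodule.le_dualCoannihilator_dualAnnihilator S hf.1
  have : f ∈ (U ⊔ S.dualCoannihilator).dualAnnihilator := by
    rw [Submodule.dualAnnihilator_sup_eq]
    exact ⟨hf.2, hN⟩
  rwa [h.sup_eq_top, Submodule.dualAnnihilator_top] at this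

end LinearAlgebra

theorem finiteDimensional_span_image_of_fg {F A M : Type*} [Field F] [AddCommGroup A]
    [AddCommGroup M] [Module F M] (ψ : A →+ M) {A' : AddSubgroup A} (hA' : A'.FG) :
    FiniteDimensional F (Submodule.span F (ψ '' A')) := by
  obtain ⟨X, rfl⟩ := hA'
  have hle : ψ '' (AddSubgroup.closure (X : Set A) : Set A) ⊆ Submodule.span F (ψ '' X) := by
    rw [← AddSubgroup.coe_map, AddMonoidHom.map_closure]
    exact AddSubgroup.closure_le (Submodule.span F _).toAddSubgroup |>.2 Submodule.subset_span
  have : FiniteDimensional F (Submodule.span F (ψ '' X)) :=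
    FiniteDimensional.span_of_finite F (X.finite_toSet.image ψ)
  exact Submodule.finiteDimensional_of_le (Submodule.span_le.2 hle)

variable {F : Type*} [Field F] {A : Type*} [AddCommGroup A] {T : Type*} [AddCommGroup T]
  [Module F T] (φ : T →ₗ[F] (A →+ F))

def evalDual : A →+ Module.Dual F T where
  toFun α :=
    { toFun := fun d => φ d α
      map_add' := fun d d' => by simp
      map_smul' := fun c d => by simp }
  map_zero' := by ext; simp
  map_add' α β := by ext; simp

@[simp]
theorem evalDual_apply (α : A) (d : T) : evalDual φ α d = φ d α := rfl

variable {φ}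

theorem Nondeg.eq_zero_of_evalDual_eq_zero (hφ : Nondeg φ) {α : A} (h : evalDual φ α = 0) :
    α = 0 :=
  hφ.1 α fun d => LinearMap.congr_fun h d

theorem Nondeg.iInf_ker_evalDual_eq_bot (hφ : Nondeg φ) : ⨅ α, LinearMap.ker (evalDual φ α) = ⊥ :=
  eq_bot_iff.2 fun d hd => hφ.2 d fun α => by
    simpa using (Submodule.mem_iInf _).1 hd α

end GW

theorem GW.exists_nondegPair_extending_general
    {F : Type*} [Field F]
    {A : Type*} [AddCommGroup A]
    {T : Type*} [AddCommGroup T] [Module F T]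
    (φ : T →ₗ[F] (A →+ F)) (hφ : GW.Nondeg φ)
    (Abar : AddSubgroup A) (hAbar : Abar.FG)
    (Tbar : Submodule F T) (hTbar : FiniteDimensional F Tbar) :
    ∃ (A' : AddSubgroup A) (T' : Submodule F T),
      Abar ≤ A' ∧ A'.FG ∧ Tbar ≤ T' ∧ FiniteDimensional F T' ∧ GW.NondegPair φ A' T' := by
  classical
  obtain ⟨g, rfl⟩ := hAbar
  obtain ⟨s, hs⟩ := exists_finset_disjoint_iInf_ker (U := Tbar) (evalDual φ)
    (hφ.iInf_ker_evalDual_eq_bot ▸ disjoint_bot_right)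
  set A' := AddSubgroup.closure (↑(g ∪ s) : Set A)
  have hA' : A'.FG := ⟨g ∪ s, rfl⟩
  set S := Submodule.span F (evalDual φ '' A')
  have : FiniteDimensional F S := finiteDimensional_span_image_of_fg _ hA'
  have hN : ∀ d, d ∈ S.dualCoannihilator ↔ ∀ α ∈ A', φ d α = 0 := fun d => by
    simp [← SetLike.mem_coe, S]
  have hTbarN : Disjoint Tbar S.dualCoannihilator := hs.mono_right fun d hd =>
    Submodule.mem_iInf _ |>.2 fun α => Submodule.mem_iInf _ |>.2 fun hα => by
      simpa using (hN d).1 hd α (AddSubgroup.subset_closure (by simp [hα]))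
  obtain ⟨T', hle, hfd, hcompl⟩ := exists_le_isCompl_dualCoannihilator hTbarN
  refine ⟨A', T', AddSubgroup.closure_mono (by simp), hA', hle, hfd, ?_, ?_⟩
  · exact fun d hd h0 => Submodule.disjoint_def.1 hcompl.disjoint d hd ((hN d).2 h0)
  · refine fun α hα h0 => hφ.eq_zero_of_evalDual_eq_zero ?_
    have hS : evalDual φ α ∈ S := Submodule.subset_span ⟨α, hα, rfl⟩
    have hT' : evalDual φ α ∈ T'.dualAnnihilator := (Submodule.mem_dualAnnihilator _).2 h0
    exact Submodule.disjoint_def.1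
      (disjoint_dualAnnihilator_of_isCompl_dualCoannihilator hcompl) _ hS hT'

/-- Lemma 3.1': for `φ` nondegenerate, any finitely generated subgroup
`Ā ≤ A` and any finite-dimensional subspace `T̄ ≤ T` are contained in a finitely
generated subgroup `A'` and a finite-dimensional subspace `T'` forming a
nondegenerate pair. -/
theorem GW.exists_nondegPair_extending
    {F : Type*} [Field F] [CharZero F]
    {A : Type*} [AddCommGroup A]
    {T : Type*} [AddCommGroup T] [Module F T]
    (φ : T →ₗ[F] (A →+ F)) (hφ : GW.Nondeg φ)
    (Abar : AddSubgroup A) (hAbar : Abar.FG)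
    (Tbar : Submodule F T) (hTbar : FiniteDimensional F Tbar) :
    ∃ (A' : AddSubgroup A) (T' : Submodule F T),
      Abar ≤ A' ∧ A'.FG ∧ Tbar ≤ T' ∧ FiniteDimensional F T' ∧ GW.NondegPair φ A' T' :=
  GW.exists_nondegPair_extending_general φ hφ Abar hAbar Tbar hTbar
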